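/- Let d ≥ 2 be a real number, let S ⊆ V be a set of vertices, each of degree in [d, 2d), with |S| ≥ 6·d^{0.6}, and let k be an even integer with 4 ≤ k ≤ d^{0.1}. Then the probability that fewer than d^{0.1} vertices of S are sampled, i.e., Pr[|S ∩ V_samp| < d^{0.1}], is at most 8·(2k/d^{0.1})^{k/2}. -/

import Mathlib

open MeasureTheory ProbabilityTheory

/-- A finite family of random variables is `k`-wise independent if every subfamily of at most
`k` of them is mutually independent. -/
def KWiseIndepFun {Ω ι β : Type*} [MeasurableSpace Ω] [MeasurableSpace β]
    (k : ℕ) (X : ι → Ω → β) (P : Measure Ω) : Prop :=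
  ∀ S : Finset ι, S.card ≤ k →
    iIndepFun (fun i : S => X i) P

/-!
Write `p_w` for the sampling probabilities, `μ = ∑_{w ∈ S} p_w`, `t = d^{1/10}` and `k = 2M`.
Since `p_w ≥ (2d)^{-1/2}` on `S`, `μ ≥ |S| (2d)^{-1/2} ≥ 4t`, so fewer than `t` sampled vertices
of `S` force the centred sum `W = ∑_{w ∈ S} (1[w ∈ V_samp] - p_w)` to satisfy `|W| ≥ μ - t ≥ 3μ/4`,
and Markov's inequality for `W^k` applies.

Expanding `E[W^k]` over `k`-tuples of vertices, `k`-wise independence factorises each term.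
Tuples in which some vertex occurs exactly once contribute `0`; any other tuple has at most `M`
distinct vertices `T` and contributes at most `∏_{w ∈ T} p_w`. Each `T` is the image of at most
`M^k` tuples, and `x^M ∑_{|T| ≤ M} ∏_T p ≤ ∏_S (1 + x p_w) ≤ e^{xμ}` for `x = M/μ ≤ 1`, whence
`E[W^k] ≤ (e M μ)^M`. With `μ ≥ 4t` this gives the bound `(4M/t)^M = (2k/t)^{k/2}`.
-/

open Finset

section KWise

variable {Ω ι β γ : Type*} [MeasurableSpace Ω] [MeasurableSpace β] [MeasurableSpace γ]
  {P : Measure Ω} {k : ℕ} {X : ι → Ω → β}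

lemma KWiseIndepFun.comp (hX : KWiseIndepFun k X P) (f : ι → β → γ)
    (hf : ∀ i, Measurable (f i)) : KWiseIndepFun k (fun i ω => f i (X i ω)) P :=
  fun T hT => (hX T hT).comp (fun i : T => f i) (fun i => hf i)

lemma KWiseIndepFun.integral_prod_comp (hX : KWiseIndepFun k X P)
    (mX : ∀ i, AEMeasurable (X i) P) (f : ι → β → ℝ) (hf : ∀ i, Measurable (f i))
    {T : Finset ι} (hT : #T ≤ k) :
    ∫ ω, ∏ i ∈ T, f i (X i ω) ∂P = ∏ i ∈ T, ∫ ω, f i (X i ω) ∂P := by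
  have h := (hX T hT).integral_fun_prod_comp (fun i => mX i)
    fun i => (hf i).aestronglyMeasurable
  -- `KWiseIndepFun` coerces `T` to a type through `SetLike` membership, so `prod_coe_sort`
  -- only matches up to defeq.
  convert h using 1
  · congr 1
    ext ω
    exact (prod_coe_sort T fun i => f i (X i ω)).symm
  · exact (prod_coe_sort T fun i => ∫ ω, f i (X i ω) ∂P).symm

variable [DecidableEq ι] {Y : ι → Ω → ℝ}

lemma KWiseIndepFun.integral_prod_tuple (hY : KWiseIndepFun k Y P)
    (mY : ∀ i, AEMeasurable (Y i) P) (g : Fin k → ι) :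
    ∫ ω, ∏ j, Y (g j) ω ∂P = ∏ i ∈ univ.image g, ∫ ω, Y i ω ^ #{j | g j = i} ∂P := by
  have hfiber (ω : Ω) := prod_comp (s := univ) (fun i => Y i ω) g
  simp_rw [hfiber]
  exact hY.integral_prod_comp mY (fun i y => y ^ #{j | g j = i}) (fun i => by fun_prop)
    (card_image_le.trans_eq (card_fin k))

lemma KWiseIndepFun.integral_prod_tuple_eq_zero (hY : KWiseIndepFun k Y P)
    (mY : ∀ i, Measurable (Y i)) (hmean : ∀ i, ∫ ω, Y i ω ∂P = 0) (g : Fin k → ι)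
    {j : Fin k} (hj : #{j' | g j' = g j} < 2) : ∫ ω, ∏ j, Y (g j) ω ∂P = 0 := by
  have hsingle : #{j' | g j' = g j} = 1 := by
    have : 0 < #{j' | g j' = g j} := card_pos.2 ⟨j, by simp⟩
    omega
  rw [hY.integral_prod_tuple (fun i => (mY i).aemeasurable)]
  exact prod_eq_zero (mem_image_of_mem g (mem_univ j)) (by simp [hsingle, hmean])

end KWise

section Moments

variable {Ω ι : Type*} [MeasurableSpace Ω] {P : Measure Ω} [IsFiniteMeasure P]

lemma abs_integral_pow_le_integral_sq {Y : Ω → ℝ} (mY : AEStronglyMeasurable Y P)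
    (hY : ∀ ω, |Y ω| ≤ 1) {m : ℕ} (hm : 2 ≤ m) :
    |∫ ω, Y ω ^ m ∂P| ≤ ∫ ω, Y ω ^ 2 ∂P := by
  have hsq : Integrable (fun ω => Y ω ^ 2) P :=
    .of_bound (mY.pow 2) 1 (.of_forall fun ω => by simpa using hY ω)
  calc |∫ ω, Y ω ^ m ∂P| ≤ ∫ ω, |Y ω ^ m| ∂P := abs_integral_le_integral_abs
    _ ≤ ∫ ω, Y ω ^ 2 ∂P := integral_mono_of_nonneg (.of_forall fun _ => abs_nonneg _) hsq
        (.of_forall fun ω => by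
          simpa [abs_pow] using pow_le_pow_of_le_one (abs_nonneg _) (hY ω) hm)

lemma KWiseIndepFun.abs_integral_prod_tuple_le [DecidableEq ι] {k : ℕ} {Y : ι → Ω → ℝ}
    (hY : KWiseIndepFun k Y P) (mY : ∀ i, Measurable (Y i)) (hbdd : ∀ i ω, |Y i ω| ≤ 1)
    {q : ι → ℝ} (hq : ∀ i, ∫ ω, Y i ω ^ 2 ∂P ≤ q i) (g : Fin k → ι)
    (hg : ∀ j, 2 ≤ #{j' | g j' = g j}) :
    |∫ ω, ∏ j, Y (g j) ω ∂P| ≤ ∏ i ∈ univ.image g, q i := by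
  rw [hY.integral_prod_tuple (fun i => (mY i).aemeasurable), abs_prod]
  refine prod_le_prod (fun _ _ => abs_nonneg _) fun i hi => ?_
  obtain ⟨j, -, rfl⟩ := mem_image.1 hi
  exact (abs_integral_pow_le_integral_sq (mY _).aestronglyMeasurable (hbdd _) (hg j)).trans
    (hq _)

end Moments

section Counting

variable {ι : Type*}

lemma two_mul_card_image_le [DecidableEq ι] {k : ℕ} {g : Fin k → ι}
    (hg : ∀ j, 2 ≤ #{j' | g j' = g j}) : 2 * #(univ.image g) ≤ k :=
  calc 2 * #(univ.image g) = ∑ _i ∈ univ.image g, 2 := by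
        rw [sum_const, smul_eq_mul, mul_comm]
    _ ≤ ∑ i ∈ univ.image g, #{j | g j = i} := sum_le_sum fun i hi => by
        obtain ⟨j, -, rfl⟩ := mem_image.1 hi
        exact hg j
    _ = k := by rw [← card_eq_sum_card_image, card_univ, Fintype.card_fin]

lemma sum_prod_image_le_sum_powerset [DecidableEq ι] {q : ι → ℝ} (hq : ∀ i, 0 ≤ q i)
    (S : Finset ι) (M : ℕ) :
    ∑ g ∈ Fintype.piFinset (fun _ : Fin (2 * M) => S) with ∀ j, 2 ≤ #{j' | g j' = g j},
        ∏ i ∈ univ.image g, q i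
      ≤ M ^ (2 * M) * ∑ T ∈ S.powerset with #T ≤ M, ∏ i ∈ T, q i := by
  set B := {g ∈ Fintype.piFinset (fun _ : Fin (2 * M) => S) | ∀ j, 2 ≤ #{j' | g j' = g j}}
  have himage : ∀ g ∈ B, univ.image g ∈ {T ∈ S.powerset | #T ≤ M} := by
    intro g hg
    simp only [B, mem_filter, Fintype.mem_piFinset] at hg
    simp only [mem_filter, mem_powerset, image_subset_iff, mem_univ, forall_const]
    exact ⟨hg.1, by linarith [two_mul_card_image_le hg.2]⟩
  have hfiber : ∀ T ∈ {T ∈ S.powerset | #T ≤ M},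
      #{g ∈ B | univ.image g = T} ≤ M ^ (2 * M) := by
    intro T hT
    calc #{g ∈ B | univ.image g = T} ≤ #(Fintype.piFinset fun _ : Fin (2 * M) => T) :=
          card_le_card fun g hg => by
            rw [mem_filter] at hg
            simp [← hg.2]
      _ ≤ M ^ (2 * M) := by simpa using Nat.pow_le_pow_left (mem_filter.1 hT).2 (2 * M)
  calc ∑ g ∈ B, ∏ i ∈ univ.image g, q i
      = ∑ T ∈ {T ∈ S.powerset | #T ≤ M}, #{g ∈ B | univ.image g = T} * ∏ i ∈ T, q i := by
        rw [← sum_fiberwise_of_maps_to himage]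
        refine sum_congr rfl fun T _ => ?_
        rw [sum_congr rfl fun g hg => by rw [(mem_filter.1 hg).2], sum_const, nsmul_eq_mul]
    _ ≤ ∑ T ∈ {T ∈ S.powerset | #T ≤ M}, (M ^ (2 * M) : ℕ) * ∏ i ∈ T, q i :=
        sum_le_sum fun T hT => mul_le_mul_of_nonneg_right (by exact_mod_cast hfiber T hT)
          (prod_nonneg fun i _ => hq i)
    _ = M ^ (2 * M) * ∑ T ∈ S.powerset with #T ≤ M, ∏ i ∈ T, q i := by
        rw [← mul_sum]
        push_cast
        rfl

lemma pow_mul_sum_powerset_le_exp {q : ι → ℝ} (hq : ∀ i, 0 ≤ q i) (S : Finset ι) (M : ℕ)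
    {x : ℝ} (hx₀ : 0 ≤ x) (hx₁ : x ≤ 1) :
    x ^ M * ∑ T ∈ S.powerset with #T ≤ M, ∏ i ∈ T, q i ≤ Real.exp (x * ∑ i ∈ S, q i) :=
  calc x ^ M * ∑ T ∈ S.powerset with #T ≤ M, ∏ i ∈ T, q i
      ≤ ∑ T ∈ S.powerset with #T ≤ M, ∏ i ∈ T, x * q i := by
        rw [mul_sum]
        refine sum_le_sum fun T hT => ?_
        rw [prod_mul_distrib, prod_const]
        exact mul_le_mul_of_nonneg_right (pow_le_pow_of_le_one hx₀ hx₁ (mem_filter.1 hT).2)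
          (prod_nonneg fun i _ => hq i)
    _ ≤ ∑ T ∈ S.powerset, ∏ i ∈ T, x * q i :=
        sum_le_sum_of_subset_of_nonneg (filter_subset _ _) fun T _ _ =>
          prod_nonneg fun i _ => mul_nonneg hx₀ (hq i)
    _ = ∏ i ∈ S, (1 + x * q i) := (prod_one_add S).symm
    _ ≤ ∏ i ∈ S, Real.exp (x * q i) :=
        prod_le_prod (fun i _ => by nlinarith [hq i]) fun i _ => by
          linarith [Real.add_one_le_exp (x * q i)]
    _ = Real.exp (x * ∑ i ∈ S, q i) := by rw [mul_sum, Real.exp_sum]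

end Counting

section Tail

variable {Ω ι : Type*} [MeasurableSpace Ω] {P : Measure Ω} [IsProbabilityMeasure P]

lemma KWiseIndepFun.integral_sum_pow_le {M : ℕ} {Y : ι → Ω → ℝ}
    (hY : KWiseIndepFun (2 * M) Y P) (mY : ∀ i, Measurable (Y i)) (hbdd : ∀ i ω, |Y i ω| ≤ 1)
    (hmean : ∀ i, ∫ ω, Y i ω ∂P = 0) {q : ι → ℝ} (hq : ∀ i, ∫ ω, Y i ω ^ 2 ∂P ≤ q i)
    (S : Finset ι) (hM : M ≤ ∑ i ∈ S, q i) :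
    ∫ ω, (∑ i ∈ S, Y i ω) ^ (2 * M) ∂P ≤ (Real.exp 1 * M * ∑ i ∈ S, q i) ^ M := by
  classical
  have hq₀ i : 0 ≤ q i := (integral_nonneg fun ω => sq_nonneg (Y i ω)).trans (hq i)
  set μ := ∑ i ∈ S, q i
  have hμ₀ : 0 ≤ μ := sum_nonneg fun i _ => hq₀ i
  have hint (g : Fin (2 * M) → ι) : Integrable (fun ω => ∏ j, Y (g j) ω) P :=
    .of_bound (by fun_prop) 1 (.of_forall fun ω => by
      rw [Real.norm_eq_abs, abs_prod]
      exact prod_le_one (fun _ _ => abs_nonneg _) fun j _ => hbdd _ ω)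
  -- `x * μ = M` also when `μ = 0`, because then `M = 0`.
  set x := (M : ℝ) / μ
  have hxμ : x * μ = M := by
    rcases hμ₀.eq_or_lt with h | h
    · have : (M : ℝ) = 0 := by linarith
      simp [x, this]
    · exact div_mul_cancel₀ _ h.ne'
  calc ∫ ω, (∑ i ∈ S, Y i ω) ^ (2 * M) ∂P
      = ∑ g ∈ Fintype.piFinset (fun _ : Fin (2 * M) => S), ∫ ω, ∏ j, Y (g j) ω ∂P := by
        simp_rw [sum_pow']
        exact integral_finsetSum _ fun g _ => hint g
    _ = ∑ g ∈ Fintype.piFinset (fun _ : Fin (2 * M) => S) with ∀ j, 2 ≤ #{j' | g j' = g j},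
          ∫ ω, ∏ j, Y (g j) ω ∂P := by
        refine (sum_filter_of_ne fun g _ hg j => ?_).symm
        by_contra! hj
        exact hg (hY.integral_prod_tuple_eq_zero mY hmean g hj)
    _ ≤ ∑ g ∈ Fintype.piFinset (fun _ : Fin (2 * M) => S) with ∀ j, 2 ≤ #{j' | g j' = g j},
          ∏ i ∈ univ.image g, q i :=
        sum_le_sum fun g hg => (le_abs_self _).trans
          (hY.abs_integral_prod_tuple_le mY hbdd hq g (mem_filter.1 hg).2)
    _ ≤ M ^ (2 * M) * ∑ T ∈ S.powerset with #T ≤ M, ∏ i ∈ T, q i :=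
        sum_prod_image_le_sum_powerset hq₀ S M
    _ = (M * μ) ^ M * (x ^ M * ∑ T ∈ S.powerset with #T ≤ M, ∏ i ∈ T, q i) := by
        rw [← mul_assoc, ← mul_pow, mul_assoc, mul_comm μ x, hxμ, pow_mul, sq]
    _ ≤ (M * μ) ^ M * Real.exp (x * μ) := by
        gcongr
        exact pow_mul_sum_powerset_le_exp hq₀ S M (by positivity) (div_le_one_of_le₀ hM hμ₀)
    _ = (Real.exp 1 * M * μ) ^ M := by
        rw [hxμ, ← Real.exp_one_pow, ← mul_pow]
        ring

lemma abs_indicator_one_sub_measureReal_le_one (E : Set Ω) (ω : Ω) :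
    |E.indicator 1 ω - P.real E| ≤ 1 := by
  have h₀ : 0 ≤ P.real E := measureReal_nonneg
  have h₁ : P.real E ≤ 1 := measureReal_le_one
  rw [abs_le]
  by_cases hω : ω ∈ E <;> simp [hω] <;> linarith

lemma integral_indicator_one_sub_measureReal {E : Set Ω} (hE : MeasurableSet E) :
    ∫ ω, (E.indicator 1 ω - P.real E) ∂P = 0 := by
  rw [integral_sub ((integrable_const 1).indicator hE) (integrable_const _),
    integral_indicator_one hE, integral_const]
  simp

lemma integral_indicator_one_sub_measureReal_sq_le {E : Set Ω} (hE : MeasurableSet E) :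
    ∫ ω, (E.indicator 1 ω - P.real E) ^ 2 ∂P ≤ P.real E := by
  have hsq ω : (E.indicator 1 ω - P.real E) ^ 2
      = E.indicator 1 ω * (1 - 2 * P.real E) + P.real E ^ 2 := by
    by_cases hω : ω ∈ E <;> simp [hω]; ring
  simp_rw [hsq]
  rw [integral_add (((integrable_const 1).indicator hE).mul_const _) (integrable_const _),
    integral_mul_const, integral_indicator_one hE, integral_const]
  simp only [probReal_univ, one_smul]
  nlinarith

lemma KWiseIndepFun.measureReal_card_lt_le {M : ℕ} {E : ι → Set Ω}
    [∀ i, DecidablePred (· ∈ E i)] (hE : ∀ i, MeasurableSet (E i))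
    (hind : KWiseIndepFun (2 * M) (fun i => (E i).indicator (1 : Ω → ℝ)) P) (S : Finset ι)
    {t : ℝ} (ht : t < ∑ i ∈ S, P.real (E i)) (hM : M ≤ ∑ i ∈ S, P.real (E i)) :
    P.real {ω | (#{i ∈ S | ω ∈ E i} : ℝ) < t}
      ≤ (Real.exp 1 * M * ∑ i ∈ S, P.real (E i)) ^ M
          / (∑ i ∈ S, P.real (E i) - t) ^ (2 * M) := by
  set μ := ∑ i ∈ S, P.real (E i)
  set Y : ι → Ω → ℝ := fun i ω => (E i).indicator 1 ω - P.real (E i)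
  have mY i : Measurable (Y i) := (measurable_const.indicator (hE i)).sub_const _
  have hbdd i ω : |Y i ω| ≤ 1 := abs_indicator_one_sub_measureReal_le_one (E i) ω
  have hmoment : ∫ ω, (∑ i ∈ S, Y i ω) ^ (2 * M) ∂P ≤ (Real.exp 1 * M * μ) ^ M :=
    (hind.comp (fun i x => x - P.real (E i)) fun i => measurable_id.sub_const _)
      |>.integral_sum_pow_le mY hbdd (fun i => integral_indicator_one_sub_measureReal (hE i))
        (fun i => integral_indicator_one_sub_measureReal_sq_le (hE i)) S hM
  have hint : Integrable (fun ω => (∑ i ∈ S, Y i ω) ^ (2 * M)) P := by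
    refine .of_bound (by fun_prop) ((#S : ℝ) ^ (2 * M)) (.of_forall fun ω => ?_)
    rw [Real.norm_eq_abs, abs_pow]
    gcongr
    exact (abs_sum_le_sum_abs _ _).trans
      (by simpa using sum_le_sum fun i (_ : i ∈ S) => hbdd i ω)
  have hsub : {ω | (#{i ∈ S | ω ∈ E i} : ℝ) < t}
      ⊆ {ω | (μ - t) ^ (2 * M) ≤ (∑ i ∈ S, Y i ω) ^ (2 * M)} := by
    intro ω (hω : (#{i ∈ S | ω ∈ E i} : ℝ) < t)
    have hsum : ∑ i ∈ S, Y i ω = #{i ∈ S | ω ∈ E i} - μ := by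
      simp [Y, sum_sub_distrib, Set.indicator_apply, sum_boole, μ]
    have hdev : μ - t ≤ |∑ i ∈ S, Y i ω| := by
      rw [hsum, abs_sub_comm]
      exact le_abs.2 (.inl (by linarith))
    show (μ - t) ^ (2 * M) ≤ (∑ i ∈ S, Y i ω) ^ (2 * M)
    rw [← (even_two_mul M).pow_abs (∑ i ∈ S, Y i ω)]
    exact pow_le_pow_left₀ (by linarith) hdev _
  rw [le_div_iff₀ (pow_pos (sub_pos.2 ht) _), mul_comm]
  calc (μ - t) ^ (2 * M) * P.real {ω | (#{i ∈ S | ω ∈ E i} : ℝ) < t}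
      ≤ (μ - t) ^ (2 * M) * P.real {ω | (μ - t) ^ (2 * M) ≤ (∑ i ∈ S, Y i ω) ^ (2 * M)} := by
        gcongr
        exact measure_ne_top P _
    _ ≤ ∫ ω, (∑ i ∈ S, Y i ω) ^ (2 * M) ∂P :=
        mul_meas_ge_le_integral_of_nonneg
          (.of_forall fun ω => (even_two_mul M).pow_nonneg _) hint _
    _ ≤ (Real.exp 1 * M * μ) ^ M := hmoment

end Tail

section Arithmetic

lemma four_mul_rpow_le {d : ℝ} (hd : 0 < d) :
    4 * d ^ ((1 : ℝ) / 10) ≤ 6 * d ^ ((3 : ℝ) / 5) * (2 * d) ^ (-(1 : ℝ) / 2) := by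
  have hadd : d ^ ((3 : ℝ) / 5) * d ^ (-(1 : ℝ) / 2) = d ^ ((1 : ℝ) / 10) := by
    rw [← Real.rpow_add hd]
    norm_num
  have hsplit : 6 * d ^ ((3 : ℝ) / 5) * (2 * d) ^ (-(1 : ℝ) / 2)
      = 6 * (2 : ℝ) ^ (-(1 : ℝ) / 2) * d ^ ((1 : ℝ) / 10) := by
    rw [Real.mul_rpow zero_le_two hd.le, ← hadd]
    ring
  have hsqrt : (2 : ℝ) ^ (-(1 : ℝ) / 2) = (Real.sqrt 2)⁻¹ := by
    rw [neg_div, Real.rpow_neg zero_le_two, Real.sqrt_eq_rpow, one_div]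
  have : Real.sqrt 2 ≤ 3 / 2 := Real.sqrt_le_iff.2 ⟨by norm_num, by norm_num⟩
  rw [hsplit, hsqrt]
  gcongr
  rw [le_mul_inv_iff₀ (by positivity)]
  linarith

lemma four_mul_rpow_le_sum_rpow {V : Type*} {S : Finset V} {f : V → ℝ} {d : ℝ} (hd : 0 < d)
    (hf : ∀ w ∈ S, d ≤ f w ∧ f w < 2 * d) (hS : 6 * d ^ ((3 : ℝ) / 5) ≤ #S) :
    4 * d ^ ((1 : ℝ) / 10) ≤ ∑ w ∈ S, f w ^ (-(1 : ℝ) / 2) :=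
  calc 4 * d ^ ((1 : ℝ) / 10) ≤ 6 * d ^ ((3 : ℝ) / 5) * (2 * d) ^ (-(1 : ℝ) / 2) :=
        four_mul_rpow_le hd
    _ ≤ #S * (2 * d) ^ (-(1 : ℝ) / 2) := by gcongr
    _ ≤ ∑ w ∈ S, f w ^ (-(1 : ℝ) / 2) := by
        rw [← nsmul_eq_mul]
        exact card_nsmul_le_sum _ _ _ fun w hw =>
          Real.rpow_le_rpow_of_nonpos (hd.trans_le (hf w hw).1) (hf w hw).2.le (by norm_num)

lemma exp_one_mul_pow_div_le {M : ℕ} {μ t : ℝ} (ht : 0 < t) (hμ : 4 * t ≤ μ) :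
    (Real.exp 1 * M * μ) ^ M / (μ - t) ^ (2 * M) ≤ (4 * M / t) ^ M := by
  have hsq : 9 / 16 * μ ^ 2 ≤ (μ - t) ^ 2 := by nlinarith
  have he : Real.exp 1 < 3 := Real.exp_one_lt_three
  have hμ₀ : 0 ≤ μ := by linarith
  have hM : (0 : ℝ) ≤ M := M.cast_nonneg
  rw [pow_mul, ← div_pow]
  refine pow_le_pow_left₀ (by positivity) ?_ M
  rw [div_le_div_iff₀ (by nlinarith) ht]
  calc Real.exp 1 * M * μ * t ≤ 3 * (M * μ) * t := by
        nlinarith [mul_nonneg (mul_nonneg hM hμ₀) ht.le]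
    _ ≤ 3 * (M * μ) * (μ / 4) := by gcongr; linarith
    _ ≤ 4 * M * (9 / 16 * μ ^ 2) := by nlinarith [mul_nonneg hM (sq_nonneg μ)]
    _ ≤ 4 * M * (μ - t) ^ 2 := by gcongr

end Arithmetic

theorem many_sampled_in_S_general {V Ω : Type*} [Fintype V] [DecidableEq V] [MeasurableSpace Ω]
    (G : SimpleGraph V) [DecidableRel G.Adj]
    (P : Measure Ω) [IsProbabilityMeasure P]
    (Vsamp : Ω → Finset V)
    (hmeas : ∀ w : V, MeasurableSet {ω | w ∈ Vsamp ω})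
    (hprob : ∀ w : V, 1 ≤ G.degree w →
      (P {ω | w ∈ Vsamp ω}).toReal = (G.degree w : ℝ) ^ (-(1 : ℝ) / 2))
    (k : ℕ) (hkeven : Even k)
    (hindep : KWiseIndepFun k (fun (w : V) (ω : Ω) => if w ∈ Vsamp ω then (1 : ℝ) else 0) P)
    (d : ℝ) (hd : 2 ≤ d)
    (S : Finset V)
    (hSdeg : ∀ w ∈ S, d ≤ (G.degree w : ℝ) ∧ (G.degree w : ℝ) < 2 * d)
    (hScard : 6 * d ^ ((3 : ℝ) / 5) ≤ (S.card : ℝ))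
    (hk : (k : ℝ) ≤ d ^ ((1 : ℝ) / 10)) :
    (P {ω | ((S.filter (fun w => w ∈ Vsamp ω)).card : ℝ) < d ^ ((1 : ℝ) / 10)}).toReal
      ≤ 8 * (2 * (k : ℝ) / d ^ ((1 : ℝ) / 10)) ^ ((k : ℝ) / 2) := by
  obtain ⟨M, rfl⟩ := hkeven.two_dvd
  set t := d ^ ((1 : ℝ) / 10)
  have ht : 0 < t := by positivity
  have hμ : 4 * t ≤ ∑ w ∈ S, P.real {ω | w ∈ Vsamp ω} := by
    refine (four_mul_rpow_le_sum_rpow (by linarith) hSdeg hScard).trans_eq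
      (sum_congr rfl fun w hw => (hprob w ?_).symm)
    exact_mod_cast (by linarith [(hSdeg w hw).1] : (1 : ℝ) ≤ G.degree w)
  have hind : KWiseIndepFun (2 * M) (fun w => {ω | w ∈ Vsamp ω}.indicator (1 : Ω → ℝ)) P := by
    convert hindep using 3 with w ω
    simp [Set.indicator_apply]
  calc P.real {ω | (#{w ∈ S | w ∈ Vsamp ω} : ℝ) < t}
      ≤ (Real.exp 1 * M * ∑ w ∈ S, P.real {ω | w ∈ Vsamp ω}) ^ M
          / (∑ w ∈ S, P.real {ω | w ∈ Vsamp ω} - t) ^ (2 * M) :=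
        hind.measureReal_card_lt_le hmeas S (by linarith) (by push_cast at hk; linarith)
    _ ≤ (4 * M / t) ^ M := exp_one_mul_pow_div_le ht hμ
    _ = (2 * ((2 * M : ℕ) : ℝ) / t) ^ (((2 * M : ℕ) : ℝ) / 2) := by
        rw [show ((2 * M : ℕ) : ℝ) / 2 = M by push_cast; ring, Real.rpow_natCast]
        push_cast
        ring
    _ ≤ 8 * _ := le_mul_of_one_le_left (by positivity) (by norm_num)

/-- Let `d ≥ 2` be a real number, let `S ⊆ V` be a set of vertices, each of degree in `[d, 2d)`,
with `|S| ≥ 6·d^{0.6}`, and let `k` be an even integer with `4 ≤ k ≤ d^{0.1}`. Each vertex `w`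
with `deg(w) ≥ 1` is sampled with probability `deg(w)^{-1/2}`, with `k`-wise independent
sampling indicators. Then the probability that fewer than `d^{0.1}` vertices of `S` are sampled
is at most `8·(2k/d^{0.1})^(k/2)`. -/
theorem many_sampled_in_S {V Ω : Type*} [Fintype V] [DecidableEq V] [MeasurableSpace Ω]
    (G : SimpleGraph V) [DecidableRel G.Adj]
    (P : Measure Ω) [IsProbabilityMeasure P]
    (Vsamp : Ω → Finset V)
    (hmeas : ∀ w : V, MeasurableSet {ω | w ∈ Vsamp ω})
    (hprob : ∀ w : V, 1 ≤ G.degree w →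
      (P {ω | w ∈ Vsamp ω}).toReal = (G.degree w : ℝ) ^ (-(1 : ℝ) / 2))
    (k : ℕ) (hk4 : 4 ≤ k) (hkeven : Even k)
    (hindep : KWiseIndepFun k (fun (w : V) (ω : Ω) => if w ∈ Vsamp ω then (1 : ℝ) else 0) P)
    (d : ℝ) (hd : 2 ≤ d)
    (S : Finset V)
    (hSdeg : ∀ w ∈ S, d ≤ (G.degree w : ℝ) ∧ (G.degree w : ℝ) < 2 * d)
    (hScard : 6 * d ^ ((3 : ℝ) / 5) ≤ (S.card : ℝ))
    (hk : (k : ℝ) ≤ d ^ ((1 : ℝ) / 10)) :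
    (P {ω | ((S.filter (fun w => w ∈ Vsamp ω)).card : ℝ) < d ^ ((1 : ℝ) / 10)}).toReal
      ≤ 8 * (2 * (k : ℝ) / d ^ ((1 : ℝ) / 10)) ^ ((k : ℝ) / 2) :=
  many_sampled_in_S_general G P Vsamp hmeas hprob k hkeven hindep d hd S hSdeg hScard hk
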